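/- arXiv:1306.4833 — 2 statements merged into one kernel-verified Lean document; each statement's English description precedes it below -/
import Mathlib

section
/- Let ξ ∈ (0,1) satisfy |sin(nπξ)| ≥ c/n for all positive integers n, for some c > 0, and let T > 2. Then there exists a constant C > 0 such that for all finitely supported families of real numbers (a_n)_{n≥1} and (b_n)_{n≥1}, ∫_0^T ( ∑_{n≥1} ( a_n cos(nπt) + (b_n/(nπ)) sin(nπt) ) sin(nπξ) )² dt ≥ C ∑_{n≥1} ( a_n²/n² + b_n²/n⁴ ). -/
/-!
Over one period `[0, 2]` the functions `cos (nπt)`, `sin (nπt)` are orthonormal, so the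
observation `t ↦ ∑ₙ (aₙ cos (nπt) + bₙ/(nπ) sin (nπt)) sin (nπξ)` has `L²(0, 2)` norm
`∑ₙ (aₙ² + bₙ²/(nπ)²) sin² (nπξ)`. The Diophantine bound `sin² (nπξ) ≥ c²/n²` makes each term at
least `c²/π² (aₙ²/n² + bₙ²/n⁴)`, and for `T > 2` the integral over `[0, T]` only adds a
nonnegative amount.
-/

open Real intervalIntegral

theorem integral_cos_int_mul_pi_mul (k : ℤ) :
    ∫ t in (0 : ℝ)..2, cos (k * π * t) = if k = 0 then 2 else 0 := by
  split_ifs with hk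
  · simp [hk]
  · have hkπ : (k : ℝ) * π ≠ 0 := by positivity
    rw [integral_comp_mul_left cos hkπ, integral_cos,
      show (k : ℝ) * π * 2 = (2 * k : ℤ) * π by push_cast; ring, sin_int_mul_pi]
    simp

theorem integral_sin_int_mul_pi_mul (k : ℤ) : ∫ t in (0 : ℝ)..2, sin (k * π * t) = 0 := by
  rcases eq_or_ne k 0 with rfl | hk
  · simp
  have hkπ : (k : ℝ) * π ≠ 0 := by positivity
  rw [integral_comp_mul_left sin hkπ, integral_sin,
    show (k : ℝ) * π * 2 = k * (2 * π) by ring, cos_int_mul_two_pi]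
  simp

theorem integral_trig_mul_trig (n m : ℕ+) (p q p' q' : ℝ) :
    ∫ t in (0 : ℝ)..2, (p * cos (n * π * t) + q * sin (n * π * t)) *
        (p' * cos (m * π * t) + q' * sin (m * π * t)) =
      if n = m then p * p' + q * q' else 0 := by
  set d : ℤ := n - m
  set e : ℤ := n + m
  have product_to_sum : ∀ t : ℝ,
      (p * cos (n * π * t) + q * sin (n * π * t)) * (p' * cos (m * π * t) + q' * sin (m * π * t)) =
        (p * p' + q * q') / 2 * cos (d * π * t) + (p * p' - q * q') / 2 * cos (e * π * t) +
          ((p * q' + q * p') / 2 * sin (e * π * t) + (q * p' - p * q') / 2 * sin (d * π * t)) := by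
    intro t
    simp only [d, e, Int.cast_sub, Int.cast_add, Int.cast_natCast, sub_mul, add_mul, cos_sub,
      cos_add, sin_add, sin_sub]
    ring
  simp_rw [product_to_sum]
  have hint {f : ℝ → ℝ} (hf : Continuous f) : IntervalIntegrable f MeasureTheory.volume 0 2 :=
    hf.intervalIntegrable _ _
  rw [integral_add (hint (by fun_prop)) (hint (by fun_prop)),
    integral_add (hint (by fun_prop)) (hint (by fun_prop)),
    integral_add (hint (by fun_prop)) (hint (by fun_prop))]
  simp only [integral_const_mul, integral_cos_int_mul_pi_mul, integral_sin_int_mul_pi_mul]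
  have he : e ≠ 0 := by positivity
  have hd : d = 0 ↔ n = m := by simp [d, sub_eq_zero]
  simp only [he, if_false, hd]
  split_ifs <;> ring

theorem integral_sq_sum_trig_eq_sum_sq (s : Finset ℕ+) (α β : ℕ+ → ℝ) :
    ∫ t in (0 : ℝ)..2, (∑ n ∈ s, (α n * cos (n * π * t) + β n * sin (n * π * t))) ^ 2 =
      ∑ n ∈ s, (α n ^ 2 + β n ^ 2) := by
  have hcont (n m : ℕ+) : Continuous fun t : ℝ => (α n * cos (n * π * t) + β n * sin (n * π * t)) *
      (α m * cos (m * π * t) + β m * sin (m * π * t)) := by fun_prop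
  simp_rw [sq, Finset.sum_mul_sum]
  rw [integral_finsetSum fun n _ =>
    (continuous_finsetSum s fun m _ => hcont n m).intervalIntegrable _ _]
  refine Finset.sum_congr rfl fun n hn => ?_
  rw [integral_finsetSum fun m _ => (hcont n m).intervalIntegrable _ _]
  simp only [integral_trig_mul_trig, Finset.sum_ite_eq, if_pos hn]

theorem sq_div_le_sq_mul_of_div_le_abs {c L x a b y : ℝ} (hc : 0 ≤ c) (hL : 1 ≤ L) (hx : 0 < x)
    (hy : c / x ≤ |y|) :
    c ^ 2 / L ^ 2 * (a ^ 2 / x ^ 2 + b ^ 2 / x ^ 4) ≤ (a * y) ^ 2 + (b / (x * L) * y) ^ 2 := by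
  have hy2 : c ^ 2 / x ^ 2 ≤ y ^ 2 := by
    rw [← div_pow, ← sq_abs y]; exact pow_le_pow_left₀ (by positivity) hy 2
  have hL2 : c ^ 2 / L ^ 2 ≤ c ^ 2 := div_le_self (by positivity) (one_le_pow₀ hL)
  calc c ^ 2 / L ^ 2 * (a ^ 2 / x ^ 2 + b ^ 2 / x ^ 4)
      ≤ c ^ 2 * (a ^ 2 / x ^ 2) + c ^ 2 / L ^ 2 * (b ^ 2 / x ^ 4) := by
        rw [mul_add]; gcongr
    _ = (a ^ 2 + (b / (x * L)) ^ 2) * (c ^ 2 / x ^ 2) := by field_simp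
    _ ≤ (a ^ 2 + (b / (x * L)) ^ 2) * y ^ 2 := by gcongr
    _ = (a * y) ^ 2 + (b / (x * L) * y) ^ 2 := by ring

theorem finsum_eq_sum_of_support_union_finite {ι R M : Type*} [Zero R] [AddCommMonoid M]
    {a b : ι → R} (hfin : (Function.support a ∪ Function.support b).Finite) {f : ι → M}
    (hf : ∀ n, a n = 0 → b n = 0 → f n = 0) : ∑ᶠ n, f n = ∑ n ∈ hfin.toFinset, f n := by
  refine finsum_eq_sum_of_support_subset_of_finite _
    (Function.support_subset_iff'.2 fun n hn => ?_) hfin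
  simp only [Set.mem_union, Function.mem_support, not_or, not_not] at hn
  exact hf n hn.1 hn.2

theorem weak_observability_string_general (ξ : ℝ)
    (c : ℝ) (hc : 0 < c)
    (hsin : ∀ n : ℕ+, c / (n : ℝ) ≤ |Real.sin ((n : ℝ) * Real.pi * ξ)|)
    (T : ℝ) (hT : 2 < T) :
    ∃ C > 0, ∀ a b : ℕ+ → ℝ,
      (Function.support a).Finite → (Function.support b).Finite →
      C * ∑ᶠ n : ℕ+, (a n ^ 2 / (n : ℝ) ^ 2 + b n ^ 2 / (n : ℝ) ^ 4) ≤
        ∫ t in (0 : ℝ)..T,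
          (∑ᶠ n : ℕ+,
            (a n * Real.cos ((n : ℝ) * Real.pi * t)
              + b n / ((n : ℝ) * Real.pi) * Real.sin ((n : ℝ) * Real.pi * t))
            * Real.sin ((n : ℝ) * Real.pi * ξ)) ^ 2 := by
  refine ⟨c ^ 2 / π ^ 2, by positivity, fun a b ha hb => ?_⟩
  have hfin := ha.union hb
  set s := hfin.toFinset
  set α : ℕ+ → ℝ := fun n => a n * sin (n * π * ξ)
  set β : ℕ+ → ℝ := fun n => b n / (n * π) * sin (n * π * ξ)
  have hobservation (t : ℝ) : ∑ᶠ n : ℕ+, (a n * cos (n * π * t) + b n / (n * π) * sin (n * π * t))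
      * sin (n * π * ξ) = ∑ n ∈ s, (α n * cos (n * π * t) + β n * sin (n * π * t)) := by
    refine (finsum_eq_sum_of_support_union_finite hfin fun n ha hb => by simp [ha, hb]).trans ?_
    exact Finset.sum_congr rfl fun n _ => by ring
  calc c ^ 2 / π ^ 2 * ∑ᶠ n : ℕ+, (a n ^ 2 / (n : ℝ) ^ 2 + b n ^ 2 / (n : ℝ) ^ 4)
      = ∑ n ∈ s, c ^ 2 / π ^ 2 * (a n ^ 2 / (n : ℝ) ^ 2 + b n ^ 2 / (n : ℝ) ^ 4) := by
        rw [← Finset.mul_sum]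
        exact congrArg _
          (finsum_eq_sum_of_support_union_finite hfin fun n ha hb => by simp [ha, hb])
    _ ≤ ∑ n ∈ s, (α n ^ 2 + β n ^ 2) := Finset.sum_le_sum fun n _ =>
        sq_div_le_sq_mul_of_div_le_abs hc.le (by linarith [pi_gt_three]) (by positivity) (hsin n)
    _ = ∫ t in (0 : ℝ)..2, (∑ n ∈ s, (α n * cos (n * π * t) + β n * sin (n * π * t))) ^ 2 :=
        (integral_sq_sum_trig_eq_sum_sq s α β).symm
    _ ≤ ∫ t in (0 : ℝ)..T, (∑ n ∈ s, (α n * cos (n * π * t) + β n * sin (n * π * t))) ^ 2 :=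
        integral_mono_interval le_rfl zero_le_two hT.le (.of_forall fun t => sq_nonneg _)
          (Continuous.intervalIntegrable (by fun_prop) _ _)
    _ = _ := by simp only [hobservation]

/-- weak observability inequality for the string observed at a
point `ξ` with `|sin(nπξ)| ≥ c/n`, in Fourier form, for `T > 2`. -/
theorem weak_observability_string (ξ : ℝ) (hξ : ξ ∈ Set.Ioo (0 : ℝ) 1)
    (c : ℝ) (hc : 0 < c)
    (hsin : ∀ n : ℕ+, c / (n : ℝ) ≤ |Real.sin ((n : ℝ) * Real.pi * ξ)|)
    (T : ℝ) (hT : 2 < T) :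
    ∃ C > 0, ∀ a b : ℕ+ → ℝ,
      (Function.support a).Finite → (Function.support b).Finite →
      C * ∑ᶠ n : ℕ+, (a n ^ 2 / (n : ℝ) ^ 2 + b n ^ 2 / (n : ℝ) ^ 4) ≤
        ∫ t in (0 : ℝ)..T,
          (∑ᶠ n : ℕ+,
            (a n * Real.cos ((n : ℝ) * Real.pi * t)
              + b n / ((n : ℝ) * Real.pi) * Real.sin ((n : ℝ) * Real.pi * t))
            * Real.sin ((n : ℝ) * Real.pi * ξ)) ^ 2 :=
  weak_observability_string_general ξ c hc hsin T hT
end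

section
/- Let ξ ∈ (0,1) satisfy |sin(nπξ)| ≥ c/n for all positive integers n, for some c > 0, and let T > 2. Then there exists a constant C > 0 such that for all finitely supported families of real numbers (a_n)_{n≥1} and (b_n)_{n≥1} there exists a real-valued function v ∈ L²(0,T) with ∫_0^T v(t)² dt ≤ C ∑_{n≥1} ( n⁴ a_n² + n² b_n² ) and such that for every n ≥ 1, 2 sin(nπξ) ∫_0^T v(t) e^{−i n π t} dt = −( b_n + i n π a_n ). -/
open MeasureTheory Complex ComplexConjugate
open scoped Real

/-! The exponentials `e_j(t) = exp(ijπt)` are orthogonal on `[0, 2]`, and `2 < T`. The control is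
`v = Re ∑ m_k e_k` on `(0, 2]` and `0` afterwards, with `m_n = -(b_n + inπ a_n) / (2 sin(nπξ))`.
Only positive frequencies occur in `∑ m_k e_k`, so the `n`-th moment of `v` is exactly `m_n`; as `v`
is real this also gives Parseval, `∫ v² = ∑ |m_n|²`, and `|sin(nπξ)| ≥ c/n` bounds `|m_n|²` by
`(1 + π²)/(4c²) (n⁴a_n² + n²b_n²)`. -/

noncomputable def expIPi (j : ℤ) (t : ℝ) : ℂ := exp (I * j * π * t)

@[fun_prop]
lemma continuous_expIPi (j : ℤ) : Continuous (expIPi j) := by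
  unfold expIPi; fun_prop

lemma expIPi_mul_expIPi (p q : ℤ) (t : ℝ) : expIPi p t * expIPi q t = expIPi (p + q) t := by
  simp only [expIPi, ← exp_add]; push_cast; ring_nf

lemma conj_expIPi (j : ℤ) (t : ℝ) : conj (expIPi j t) = expIPi (-j) t := by
  simp only [expIPi, ← exp_conj, map_mul, conj_I, conj_ofReal, map_intCast]; push_cast; ring_nf

lemma integral_expIPi (j : ℤ) : ∫ t in (0 : ℝ)..2, expIPi j t = if j = 0 then 2 else 0 := by
  split_ifs with hj
  · simp [expIPi, hj]
  · have hc : I * j * π ≠ 0 := by simp [hj, Real.pi_ne_zero]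
    have hperiod : I * j * π * (2 : ℝ) = j * (2 * π * I) := by push_cast; ring
    simp only [expIPi, integral_exp_mul_complex hc, hperiod, exp_int_mul_two_pi_mul_I]
    simp

noncomputable def realTrigPoly (s : Finset ℕ+) (m : ℕ+ → ℂ) (t : ℝ) : ℝ :=
  ∑ k ∈ s, (m k * expIPi k t).re

section realTrigPoly

variable (s : Finset ℕ+) (m : ℕ+ → ℂ)

@[fun_prop]
lemma continuous_realTrigPoly : Continuous (realTrigPoly s m) := by
  unfold realTrigPoly; fun_prop

lemma ofReal_realTrigPoly_mul_expIPi (n : ℤ) (t : ℝ) :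
    (realTrigPoly s m t : ℂ) * expIPi (-n) t
      = ∑ k ∈ s, (m k / 2 * expIPi (k - n) t + conj (m k) / 2 * expIPi (-(k + n)) t) := by
  rw [realTrigPoly, ofReal_sum, Finset.sum_mul]
  refine Finset.sum_congr rfl fun k _ => ?_
  rw [re_eq_add_conj, map_mul, conj_expIPi, sub_eq_add_neg, neg_add, ← expIPi_mul_expIPi,
    ← expIPi_mul_expIPi]
  ring

lemma integral_realTrigPoly_mul_expIPi_neg (n : ℕ+) :
    ∫ t in (0 : ℝ)..2, (realTrigPoly s m t : ℂ) * expIPi (-n) t = if n ∈ s then m n else 0 := by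
  simp_rw [ofReal_realTrigPoly_mul_expIPi]
  rw [intervalIntegral.integral_finsetSum fun k _ => by
    apply Continuous.intervalIntegrable; fun_prop]
  have hterm : ∀ k ∈ s, ∫ t in (0 : ℝ)..2,
      (m k / 2 * expIPi (k - n) t + conj (m k) / 2 * expIPi (-(k + n)) t)
        = if k = n then m k else 0 := by
    intro k _
    have hpos : -((k : ℤ) + n) ≠ 0 := by have := k.pos; have := n.pos; omega
    have hsub : (k : ℤ) - n = 0 ↔ k = n := by rw [sub_eq_zero]; exact_mod_cast PNat.coe_inj
    rw [intervalIntegral.integral_add (by apply Continuous.intervalIntegrable; fun_prop)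
        (by apply Continuous.intervalIntegrable; fun_prop),
      intervalIntegral.integral_const_mul, intervalIntegral.integral_const_mul,
      integral_expIPi, integral_expIPi, if_neg hpos]
    by_cases hkn : k = n <;> simp [hkn, hsub]
  rw [Finset.sum_congr rfl hterm, Finset.sum_ite_eq']

lemma integral_realTrigPoly_sq :
    ∫ t in (0 : ℝ)..2, realTrigPoly s m t ^ 2 = ∑ k ∈ s, normSq (m k) := by
  have hpoint : ∀ t, realTrigPoly s m t ^ 2
      = ∑ k ∈ s, (m k * ((realTrigPoly s m t : ℂ) * expIPi k t)).re := by
    intro t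
    rw [sq]
    conv_lhs => enter [2]; rw [realTrigPoly]
    rw [Finset.mul_sum]
    refine Finset.sum_congr rfl fun k _ => ?_
    rw [mul_left_comm, re_ofReal_mul]
  have hconj : ∀ k ∈ s,
      ∫ t in (0 : ℝ)..2, (realTrigPoly s m t : ℂ) * expIPi k t = conj (m k) := by
    intro k hk
    have hmoment := integral_realTrigPoly_mul_expIPi_neg s m k
    rw [if_pos hk] at hmoment
    rw [← hmoment, ← intervalIntegral.intervalIntegral_conj]
    simp_rw [map_mul, conj_ofReal, conj_expIPi, neg_neg]
  simp_rw [hpoint]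
  rw [intervalIntegral.integral_finsetSum fun k _ => by
    apply Continuous.intervalIntegrable; fun_prop]
  refine Finset.sum_congr rfl fun k hk => ?_
  have hint : Continuous fun t => m k * ((realTrigPoly s m t : ℂ) * expIPi k t) := by fun_prop
  calc ∫ t in (0 : ℝ)..2, (m k * ((realTrigPoly s m t : ℂ) * expIPi k t)).re
      = (∫ t in (0 : ℝ)..2, m k * ((realTrigPoly s m t : ℂ) * expIPi k t)).re := by
        simpa only [RCLike.re_to_complex] using
          intervalIntegral.intervalIntegral_re (hint.intervalIntegrable 0 2)
    _ = normSq (m k) := by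
        rw [intervalIntegral.integral_const_mul, hconj k hk, mul_conj, ofReal_re]

end realTrigPoly

lemma intervalIntegral_comp_indicator_Ioc {M E : Type*} [Zero M] [NormedAddCommGroup E]
    [NormedSpace ℝ E] {a b c : ℝ} (hab : a ≤ b) (hbc : b ≤ c) {F : ℝ → M → E}
    (hF : ∀ t, F t 0 = 0) (f : ℝ → M) :
    ∫ t in a..c, F t ((Set.Ioc a b).indicator f t) = ∫ t in a..b, F t (f t) := by
  have hpoint : ∀ t, F t ((Set.Ioc a b).indicator f t)
      = (Set.Ioc a b).indicator (fun t => F t (f t)) t := by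
    intro t
    by_cases ht : t ∈ Set.Ioc a b <;> simp [ht, hF]
  simp_rw [hpoint]
  rw [intervalIntegral.integral_of_le (hab.trans hbc), intervalIntegral.integral_of_le hab,
    integral_indicator measurableSet_Ioc, Measure.restrict_restrict measurableSet_Ioc,
    Set.inter_eq_self_of_subset_left (Set.Ioc_subset_Ioc_right hbc)]

lemma normSq_neg_div_two_mul_le {c K S : ℝ} (hc : 0 < c) (hK : 0 < K) (hS : c / K ≤ |S|)
    (x y : ℝ) :
    normSq (-((x : ℂ) + I * K * π * y) / (2 * S))
      ≤ (1 + π ^ 2) / (4 * c ^ 2) * (K ^ 4 * y ^ 2 + K ^ 2 * x ^ 2) := by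
  have hnum : -((x : ℂ) + I * K * π * y) = (-x : ℝ) + (-(K * π * y) : ℝ) * I := by
    push_cast; ring
  have hden : (2 * S : ℂ) = (2 * S : ℝ) := by push_cast; ring
  have hcS : c ^ 2 ≤ K ^ 2 * S ^ 2 := by
    have h := pow_le_pow_left₀ (by positivity) hS 2
    rw [sq_abs, div_pow, div_le_iff₀ (by positivity)] at h
    linarith
  have hS0 : S ≠ 0 := by
    rintro rfl
    exact (div_pos hc hK).not_ge (by simpa using hS)
  rw [normSq_div, hnum, hden, normSq_add_mul_I, normSq_ofReal,
    div_le_iff₀ (mul_self_pos.2 (mul_ne_zero two_ne_zero hS0)),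
    show (1 + π ^ 2) / (4 * c ^ 2) * (K ^ 4 * y ^ 2 + K ^ 2 * x ^ 2) * (2 * S * (2 * S))
      = (1 + π ^ 2) * (x ^ 2 + K ^ 2 * y ^ 2) * (K ^ 2 * S ^ 2) / c ^ 2 by field_simp; ring,
    le_div_iff₀ (by positivity)]
  nlinarith [mul_le_mul_of_nonneg_left hcS
      (by positivity : 0 ≤ (1 + π ^ 2) * (x ^ 2 + K ^ 2 * y ^ 2)),
    mul_nonneg (sq_nonneg (π * x)) (sq_nonneg c), mul_nonneg (sq_nonneg (K * y)) (sq_nonneg c)]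

theorem string_weak_controllability_moments_general (ξ : ℝ)
    (c : ℝ) (hc : 0 < c)
    (hsin : ∀ n : ℕ+, c / (n : ℝ) ≤ |Real.sin ((n : ℝ) * Real.pi * ξ)|)
    (T : ℝ) (hT : 2 < T) :
    ∃ C > 0, ∀ a b : ℕ+ → ℝ,
      (Function.support a).Finite → (Function.support b).Finite →
      ∃ v : ℝ → ℝ,
        MeasureTheory.MemLp v 2 (MeasureTheory.volume.restrict (Set.Ioc 0 T)) ∧
        (∫ t in (0 : ℝ)..T, v t ^ 2)
          ≤ C * ∑ᶠ n : ℕ+, ((n : ℝ) ^ 4 * a n ^ 2 + (n : ℝ) ^ 2 * b n ^ 2) ∧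
        ∀ n : ℕ+,
          2 * (Real.sin ((n : ℝ) * Real.pi * ξ) : ℂ)
              * ∫ t in (0 : ℝ)..T,
                  (v t : ℂ) * Complex.exp (-(Complex.I * (n : ℕ) * (Real.pi : ℂ) * (t : ℂ)))
            = -((b n : ℂ) + Complex.I * (n : ℕ) * (Real.pi : ℂ) * (a n : ℂ)) := by
  classical
  refine ⟨(1 + π ^ 2) / (4 * c ^ 2), by positivity, fun a b ha hb => ?_⟩
  set s := ha.toFinset ∪ hb.toFinset
  have hab : ∀ n ∉ s, a n = 0 ∧ b n = 0 := fun n hn => by simpa [s, not_or] using hn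
  have hsin_ne : ∀ n : ℕ+, Real.sin (n * π * ξ) ≠ 0 := fun n h => by
    have := hsin n
    rw [h, abs_zero] at this
    exact (div_pos hc (by positivity)).not_ge this
  set m : ℕ+ → ℂ := fun n => -((b n : ℂ) + I * (n : ℕ) * π * a n) / (2 * Real.sin (n * π * ξ))
  have hv := continuous_realTrigPoly s m
  refine ⟨(Set.Ioc 0 2).indicator (realTrigPoly s m),
    ((memLp_two_iff_integrable_sq hv.aestronglyMeasurable).2
      (hv.pow 2).integrableOn_Ioc).indicator measurableSet_Ioc, ?_, fun n => ?_⟩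
  · rw [intervalIntegral_comp_indicator_Ioc zero_le_two hT.le (F := fun _ x => x ^ 2)
      (fun _ => zero_pow two_ne_zero), integral_realTrigPoly_sq,
      finsum_eq_sum_of_support_subset (s := s), Finset.mul_sum]
    · exact Finset.sum_le_sum fun k _ => by
        simpa only [ofReal_natCast] using
          normSq_neg_div_two_mul_le hc (by positivity) (hsin k) (b k) (a k)
    · intro n hn
      by_contra hns
      simp [hab n hns] at hn
  · have hexp : ∀ t : ℝ, exp (-(I * (n : ℕ) * π * t)) = expIPi (-n) t := fun t => by
      simp only [expIPi]; push_cast; ring_nf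
    simp_rw [hexp]
    rw [intervalIntegral_comp_indicator_Ioc zero_le_two hT.le
      (F := fun t (x : ℝ) => (x : ℂ) * expIPi (-n) t) (by simp),
      integral_realTrigPoly_mul_expIPi_neg]
    split_ifs with hn
    · exact mul_div_cancel₀ _ (by exact_mod_cast mul_ne_zero two_ne_zero (hsin_ne n))
    · simp [hab n hn]

/-- weak controllability of the string by a point control at
`ξ`, in moment form. -/
theorem string_weak_controllability_moments (ξ : ℝ) (hξ : ξ ∈ Set.Ioo (0 : ℝ) 1)
    (c : ℝ) (hc : 0 < c)
    (hsin : ∀ n : ℕ+, c / (n : ℝ) ≤ |Real.sin ((n : ℝ) * Real.pi * ξ)|)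
    (T : ℝ) (hT : 2 < T) :
    ∃ C > 0, ∀ a b : ℕ+ → ℝ,
      (Function.support a).Finite → (Function.support b).Finite →
      ∃ v : ℝ → ℝ,
        MeasureTheory.MemLp v 2 (MeasureTheory.volume.restrict (Set.Ioc 0 T)) ∧
        (∫ t in (0 : ℝ)..T, v t ^ 2)
          ≤ C * ∑ᶠ n : ℕ+, ((n : ℝ) ^ 4 * a n ^ 2 + (n : ℝ) ^ 2 * b n ^ 2) ∧
        ∀ n : ℕ+,
          2 * (Real.sin ((n : ℝ) * Real.pi * ξ) : ℂ)
              * ∫ t in (0 : ℝ)..T,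
                  (v t : ℂ) * Complex.exp (-(Complex.I * (n : ℕ) * (Real.pi : ℂ) * (t : ℂ)))
            = -((b n : ℂ) + Complex.I * (n : ℕ) * (Real.pi : ℂ) * (a n : ℂ)) :=
  string_weak_controllability_moments_general ξ c hc hsin T hT
end
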